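/- arXiv:1709.05535 — 5 statements merged into one kernel-verified Lean document; each statement's English description precedes it below -/
import Mathlib

section
/- Let P = RN be a parabolic-type group with N = 1+J, λ ∈ J* with right N-stabilizer subalgebra J_{λ,rt} = {x ∈ J : λ(xJ)=0}, and let R° ≤ R be a subgroup fixing λ under both left and right actions (λ(rx) = λ(x) = λ(xr) for all x ∈ J, r ∈ R°). Let P_λ = R°·(1+J_{λ,rt}), so every element of P_λ is uniquely g = r + x with r ∈ R°, x ∈ J_{λ,rt}. Fix a nontrivial additive character ε: F_q → ℂ* and a representation T of R° with character θ. Then Ξ(g) = T(r)·ε^{λ(x)} for g = r + x defines a representation of P_λ, i.e. Ξ(gg') = Ξ(g)Ξ(g') for all g, g' ∈ P_λ. -/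
/-!
The right stabilizer `J_{λ,rt} = {x ∈ J | λ(xJ) = 0}` is a subalgebra of `J`, and it is stable
under multiplication by `R°` on both sides because `R°` preserves `J` and fixes `λ`. Hence
`(r + x)(r' + x') = rr' + z` with `z = rx' + xr' + xx' ∈ J_{λ,rt}`, and
`λ(z) = λ(x') + λ(x) + 0`, so `Ξ` is multiplicative because `ε` turns this sum into a product.
-/

section RightStabilizer

variable {F A : Type*} [CommSemiring F] [Semiring A] [Algebra F A]

def NonUnitalSubalgebra.rightStab (J : NonUnitalSubalgebra F A) (l : A →ₗ[F] F) :
    NonUnitalSubalgebra F A where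
  carrier := {x | x ∈ J ∧ ∀ y ∈ J, l (x * y) = 0}
  zero_mem' := ⟨J.zero_mem, fun y _ => by rw [zero_mul, map_zero]⟩
  add_mem' := fun ⟨hxJ, hx⟩ ⟨hyJ, hy⟩ =>
    ⟨J.add_mem hxJ hyJ, fun z hz => by rw [add_mul, map_add, hx z hz, hy z hz, add_zero]⟩
  mul_mem' := fun ⟨hxJ, hx⟩ ⟨hyJ, _⟩ =>
    ⟨J.mul_mem hxJ hyJ, fun z hz => by rw [mul_assoc]; exact hx _ (J.mul_mem hyJ hz)⟩
  smul_mem' := fun c _ ⟨hxJ, hx⟩ =>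
    ⟨J.smul_mem c hxJ, fun z hz => by rw [smul_mul_assoc, map_smul, hx z hz, smul_zero]⟩

namespace NonUnitalSubalgebra

variable {J : NonUnitalSubalgebra F A} {l : A →ₗ[F] F} {a x : A}

theorem mem_rightStab : x ∈ J.rightStab l ↔ x ∈ J ∧ ∀ y ∈ J, l (x * y) = 0 :=
  Iff.rfl

theorem mul_mem_rightStab_of_left (hJ : ∀ y ∈ J, a * y ∈ J) (hl : ∀ y ∈ J, l (a * y) = l y)
    (hx : x ∈ J.rightStab l) : a * x ∈ J.rightStab l := by
  obtain ⟨hxJ, hxl⟩ := mem_rightStab.1 hx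
  refine mem_rightStab.2 ⟨hJ x hxJ, fun y hy => ?_⟩
  rw [mul_assoc, hl _ (J.mul_mem hxJ hy)]
  exact hxl y hy

theorem mul_mem_rightStab_of_right (hJl : ∀ y ∈ J, a * y ∈ J) (hJr : ∀ y ∈ J, y * a ∈ J)
    (hx : x ∈ J.rightStab l) : x * a ∈ J.rightStab l := by
  obtain ⟨hxJ, hxl⟩ := mem_rightStab.1 hx
  refine mem_rightStab.2 ⟨hJr x hxJ, fun y hy => ?_⟩
  rw [mul_assoc]
  exact hxl _ (hJl y hy)

end NonUnitalSubalgebra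

end RightStabilizer

theorem add_mul_add_eq_mul_add {A : Type*} [NonUnitalNonAssocSemiring A] (a b x y : A) :
    (a + x) * (b + y) = a * b + (a * y + x * b + x * y) := by
  simp only [add_mul, mul_add]
  abel

theorem stmt5_general (F : Type) [Field F]
    (A : Type) [Ring A] [Algebra F A]
    (J : NonUnitalSubalgebra F A)
    (l : A →ₗ[F] F)
    (Rcirc : Subgroup Aˣ)
    -- `J` is invariant under left and right multiplication by `R°`
    (hJinv : ∀ r ∈ Rcirc, ∀ x ∈ J, ((r : A) * x ∈ J) ∧ (x * (r : A) ∈ J))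
    -- `R°` fixes `λ` under both the left and the right action
    (hStab : ∀ r ∈ Rcirc, ∀ x ∈ J, l ((r : A) * x) = l x ∧ l (x * (r : A)) = l x)
    (ε : AddChar F ℂ)
    (d : ℕ) (T : Rcirc →* Matrix (Fin d) (Fin d) ℂ) :
    ∀ (r r' : Rcirc) (x x' : A),
      (x ∈ J ∧ ∀ y ∈ J, l (x * y) = 0) →
      (x' ∈ J ∧ ∀ y ∈ J, l (x' * y) = 0) →
      -- the product decomposes again in `P_λ`:
      (((r : Aˣ) : A) + x) * (((r' : Aˣ) : A) + x')
          = (((r * r' : Rcirc) : Aˣ) : A)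
            + (((r : Aˣ) : A) * x' + x * ((r' : Aˣ) : A) + x * x') ∧
      ((((r : Aˣ) : A) * x' + x * ((r' : Aˣ) : A) + x * x') ∈ J ∧
        ∀ y ∈ J, l ((((r : Aˣ) : A) * x' + x * ((r' : Aˣ) : A) + x * x') * y) = 0) ∧
      -- multiplicativity `Ξ(gg') = Ξ(g)Ξ(g')`:
      ε (l (((r : Aˣ) : A) * x' + x * ((r' : Aˣ) : A) + x * x')) • T (r * r')
        = (ε (l x) • T r) * (ε (l x') • T r') := by
  intro r r' x x' hx hx'
  have hJr := fun y hy => (hJinv r r.2 y hy).1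
  have hJr'l := fun y hy => (hJinv r' r'.2 y hy).1
  have hJr'r := fun y hy => (hJinv r' r'.2 y hy).2
  have hl : l (((r : Aˣ) : A) * x' + x * ((r' : Aˣ) : A) + x * x') = l x + l x' := by
    rw [map_add, map_add, (hStab r r.2 x' hx'.1).1, (hStab r' r'.2 x hx.1).2, hx.2 x' hx'.1]
    ring
  refine ⟨add_mul_add_eq_mul_add _ _ _ _, J.mem_rightStab.1 ?_, ?_⟩
  · rw [← J.mem_rightStab] at hx hx'
    exact add_mem (add_mem
      (NonUnitalSubalgebra.mul_mem_rightStab_of_left hJr (fun y hy => (hStab r r.2 y hy).1) hx')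
      (NonUnitalSubalgebra.mul_mem_rightStab_of_right hJr'l hJr'r hx)) (mul_mem hx hx')
  · rw [hl, map_mul, AddChar.map_add_eq_mul, smul_mul_smul_comm]

/-- with `P_λ = R°·(1+J_{λ,rt})`, every element written uniquely `g = r + x`,
`Ξ(g) = ε^{λ(x)} • T(r)` defines a representation of `P_λ`: the product `g g' = r r' + z`
has `J_{λ,rt}`-component `z = r x' + x r' + x x'` lying in `J_{λ,rt}`, and
`Ξ(g g') = Ξ(g) Ξ(g')`. -/
theorem stmt5 (F : Type) [Field F] [Fintype F]
    (A : Type) [Ring A] [Algebra F A]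
    (J : NonUnitalSubalgebra F A)
    (hnil : ∀ x ∈ J, IsNilpotent x)
    (l : A →ₗ[F] F)
    (Rcirc : Subgroup Aˣ)
    -- `J` is invariant under left and right multiplication by `R°`
    (hJinv : ∀ r ∈ Rcirc, ∀ x ∈ J, ((r : A) * x ∈ J) ∧ (x * (r : A) ∈ J))
    -- `R°` fixes `λ` under both the left and the right action
    (hStab : ∀ r ∈ Rcirc, ∀ x ∈ J, l ((r : A) * x) = l x ∧ l (x * (r : A)) = l x)
    (ε : AddChar F ℂ) (hε : ∃ t, ε t ≠ 1)
    (d : ℕ) (T : Rcirc →* Matrix (Fin d) (Fin d) ℂ) :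
    ∀ (r r' : Rcirc) (x x' : A),
      (x ∈ J ∧ ∀ y ∈ J, l (x * y) = 0) →
      (x' ∈ J ∧ ∀ y ∈ J, l (x' * y) = 0) →
      -- the product decomposes again in `P_λ`:
      (((r : Aˣ) : A) + x) * (((r' : Aˣ) : A) + x')
          = (((r * r' : Rcirc) : Aˣ) : A)
            + (((r : Aˣ) : A) * x' + x * ((r' : Aˣ) : A) + x * x') ∧
      ((((r : Aˣ) : A) * x' + x * ((r' : Aˣ) : A) + x * x') ∈ J ∧
        ∀ y ∈ J, l ((((r : Aˣ) : A) * x' + x * ((r' : Aˣ) : A) + x * x') * y) = 0) ∧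
      -- multiplicativity `Ξ(gg') = Ξ(g)Ξ(g')`:
      ε (l (((r : Aˣ) : A) * x' + x * ((r' : Aˣ) : A) + x * x')) • T (r * r')
        = (ε (l x) • T r) * (ε (l x') • T r') :=
  stmt5_general F A J l Rcirc hJinv hStab ε d T
end

section
/- The induced character χ_{λ,θ} = Ind_{P_λ}^P ξ_{λ,θ} is constant on each equivalence class K(g) = {1 + ra(g−1)br⁻¹ : r ∈ R, a, b ∈ N} of P. -/
/-!
Write `g' = 1 + r a (g - 1) b r⁻¹` as `t (1 + (g - 1) b a) t⁻¹` with `t = r a ∈ P`. The induced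
character is a class function on `P`, so `χ(g') = χ(1 + (g - 1) c)` with `c = b a ∈ N`. Conjugating
by `s ∈ P` gives `1 + (s⁻¹ g s - 1) c'` with `c' = s⁻¹ c s ∈ N`, and the extension by zero of `ξ`
does not see the factor `c' = 1 + y`: for `p = r + x ∈ P_λ` one has
`1 + (p - 1)(1 + y) = r + x'` with `x' = x + r y - y + x y ∈ J_{λ,rt}` and `λ(x') = λ(x)`,
by the `R°`-invariance of `λ`.
-/

open scoped Classical

section OneAddUnits

variable {A : Type*} [Ring A] {S : Type*} [SetLike S A] [NonUnitalSubringClass S A]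

lemma mul_sub_one_mem {J : S} {a b : A} (ha : a - 1 ∈ J) (hb : b - 1 ∈ J) : a * b - 1 ∈ J := by
  have h : a * b - 1 = (a - 1) * (b - 1) + (a - 1) + (b - 1) := by noncomm_ring
  rw [h]
  exact add_mem (add_mem (mul_mem ha hb) ha) hb

variable (J : S)

/-- Asking for `u⁻¹ - 1 ∈ J` too makes this a subgroup without any nilpotence assumption. -/
def oneAddUnits : Subgroup Aˣ where
  carrier := {u | (u : A) - 1 ∈ J ∧ ((u⁻¹ : Aˣ) : A) - 1 ∈ J}
  mul_mem' {u v} hu hv := by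
    refine ⟨by simpa using mul_sub_one_mem hu.1 hv.1, ?_⟩
    simpa [mul_inv_rev] using mul_sub_one_mem hv.2 hu.2
  one_mem' := by simp [zero_mem]
  inv_mem' {u} hu := by simpa using hu.symm

variable {J}

lemma pow_succ_mem {x : A} (hx : x ∈ J) (n : ℕ) : x ^ (n + 1) ∈ J := by
  induction n with
  | zero => simpa using hx
  | succ n ih => rw [pow_succ]; exact mul_mem ih hx

lemma exists_mem_oneAddUnits_val_eq {x : A} (hx : x ∈ J) (hnil : IsNilpotent x) :
    ∃ u ∈ oneAddUnits J, (u : A) = 1 + x := by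
  obtain ⟨u, hu⟩ := hnil.isUnit_one_add
  obtain ⟨n, hn⟩ := hnil
  have hinv : ((u⁻¹ : Aˣ) : A) = ∑ i ∈ Finset.range (n + 1), (-x) ^ i := by
    apply Units.inv_eq_of_mul_eq_one_right
    rw [hu, ← sub_neg_eq_add, mul_neg_geom_sum, neg_pow, pow_succ x, hn]
    simp
  refine ⟨u, ⟨by simpa [hu] using hx, ?_⟩, hu⟩
  rw [hinv, Finset.sum_range_succ', pow_zero, add_sub_cancel_right]
  exact sum_mem fun i _ => pow_succ_mem (neg_mem hx) i

variable {R : Subgroup Aˣ}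

lemma conj_mem_oneAddUnits (hR : ∀ r ∈ R, ∀ x ∈ J, (r : A) * x ∈ J ∧ x * (r : A) ∈ J)
    {r u : Aˣ} (hr : r ∈ R) (hu : u ∈ oneAddUnits J) : r * u * r⁻¹ ∈ oneAddUnits J := by
  have hconj : ∀ v : Aˣ, (v : A) - 1 ∈ J → ((r * v * r⁻¹ : Aˣ) : A) - 1 ∈ J := fun v hv => by
    have h : ((r * v * r⁻¹ : Aˣ) : A) - 1 = r * ((v : A) - 1) * ((r⁻¹ : Aˣ) : A) := by
      simp [mul_sub, sub_mul, mul_assoc]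
    rw [h]
    exact (hR _ (R.inv_mem hr) _ (hR r hr _ hv).1).2
  exact ⟨hconj u hu.1, by simpa [mul_assoc] using hconj u⁻¹ hu.2⟩

lemma le_normalizer_oneAddUnits (hR : ∀ r ∈ R, ∀ x ∈ J, (r : A) * x ∈ J ∧ x * (r : A) ∈ J) :
    R ≤ Subgroup.normalizer (oneAddUnits J : Set Aˣ) := fun r hr u => by
  refine ⟨conj_mem_oneAddUnits hR hr, fun hu => ?_⟩
  simpa [mul_assoc] using conj_mem_oneAddUnits hR (R.inv_mem hr) hu

lemma setOf_mul_one_add_eq_sup (hnil : ∀ x ∈ J, IsNilpotent x)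
    (hR : ∀ r ∈ R, ∀ x ∈ J, (r : A) * x ∈ J ∧ x * (r : A) ∈ J) :
    {s : Aˣ | ∃ r ∈ R, ∃ x ∈ J, (s : A) = r * (1 + x)} = ↑(R ⊔ oneAddUnits J) := by
  rw [Subgroup.coe_mul_of_left_le_normalizer_right _ _ (le_normalizer_oneAddUnits hR)]
  ext s
  simp only [Set.mem_ofPred_eq, Set.mem_mul, SetLike.mem_coe]
  constructor
  · rintro ⟨r, hr, x, hx, hs⟩
    obtain ⟨u, hu, hux⟩ := exists_mem_oneAddUnits_val_eq hx (hnil x hx)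
    exact ⟨r, hr, u, hu, Units.ext (by rw [Units.val_mul, hux, hs])⟩
  · rintro ⟨r, hr, u, hu, rfl⟩
    exact ⟨r, hr, (u : A) - 1, hu.1, by simp⟩

end OneAddUnits

section InducedChar

variable {M β : Type*} [AddCommMonoid β]

/-- `|Q| • Ind_Q^P ξ` at `g`, with `ξ` extended by zero outside `Q`. -/
noncomputable def inducedChar [Monoid M] (P : Set Mˣ) (Q : Set M) (ξ : M → β) (g : M) : β :=
  ∑ᶠ s ∈ P, Q.indicator ξ (↑s⁻¹ * g * ↑s)

lemma inducedChar_conj [Monoid M] {P : Subgroup Mˣ} (Q : Set M) (ξ : M → β) {t : Mˣ}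
    (ht : t ∈ P) (g : M) : inducedChar P Q ξ (↑t * g * ↑t⁻¹) = inducedChar P Q ξ g := by
  refine finsum_mem_eq_of_bijOn (t⁻¹ * ·) ⟨?_, ?_, ?_⟩ fun s _ => ?_
  · exact fun s hs => P.mul_mem (P.inv_mem ht) hs
  · exact fun a _ b _ h => mul_left_cancel h
  · exact fun s hs => ⟨t * s, P.mul_mem ht hs, inv_mul_cancel_left t s⟩
  · simp [mul_assoc]

lemma inducedChar_one_add_sub_one_mul {A : Type*} [Ring A] {P N : Subgroup Aˣ}
    (hPN : P ≤ Subgroup.normalizer (N : Set Aˣ)) {Q : Set A} {ξ : A → β}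
    (hQ : ∀ p, ∀ n ∈ N, Q.indicator ξ (1 + (p - 1) * n) = Q.indicator ξ p)
    {n : Aˣ} (hn : n ∈ N) (g : A) :
    inducedChar P Q ξ (1 + (g - 1) * n) = inducedChar P Q ξ g := by
  refine finsum_mem_congr rfl fun s hs => ?_
  have hconj : ((s⁻¹ : Aˣ) : A) * (1 + (g - 1) * n) * s
      = 1 + (↑s⁻¹ * g * ↑s - 1) * ↑(s⁻¹ * n * s) := by
    simp [mul_add, add_mul, sub_mul, mul_sub, mul_assoc]
  rw [hconj, hQ _ _ ((Subgroup.mem_normalizer_iff''.mp (hPN hs) n).mp hn)]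

end InducedChar

section PLambda

variable {A : Type*} [Ring A] {S : Type*} [SetLike S A] {L M : Type*} [AddCommGroup M]
  [FunLike L A M] {R : Subgroup Aˣ} {J : S} {l : L}

/-- `J_{λ,rt}` -/
def rightRadical (J : S) (l : L) : Set A := {x | x ∈ J ∧ ∀ y ∈ J, l (x * y) = 0}

/-- `P_λ = R°(1 + J_{λ,rt})`, written as `R° + J_{λ,rt}`. -/
def pLambda (R : Subgroup Aˣ) (J : S) (l : L) : Set A :=
  {p | ∃ r ∈ R, ∃ x ∈ rightRadical J l, p = r + x}

lemma ite_eq_indicator_pLambda {β : Type*} [Zero β] (ξ : A → β) (p : A)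
    [Decidable (∃ r ∈ R, ∃ x : A, (x ∈ J ∧ ∀ y ∈ J, l (x * y) = 0) ∧ p = r + x)] :
    (if ∃ r ∈ R, ∃ x : A, (x ∈ J ∧ ∀ y ∈ J, l (x * y) = 0) ∧ p = r + x then ξ p else 0)
      = (pLambda R J l).indicator ξ p := by
  rw [Set.indicator_apply]
  exact if_congr Iff.rfl rfl rfl

variable [NonUnitalSubringClass S A] [AddMonoidHomClass L A M]

lemma exists_mem_rightRadical_one_add_mul (hRJ : ∀ r ∈ R, ∀ y ∈ J, (r : A) * y ∈ J)
    (hl : ∀ r ∈ R, ∀ y ∈ J, l ((r : A) * y) = l y) {r : Aˣ} (hr : r ∈ R) {x : A}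
    (hx : x ∈ rightRadical J l) {y : A} (hy : y ∈ J) :
    ∃ x' ∈ rightRadical J l, 1 + (r + x - 1) * (1 + y) = r + x' ∧ l x' = l x := by
  refine ⟨x + (r * y - y + x * y), ⟨?_, fun z hz => ?_⟩, by noncomm_ring, ?_⟩
  · exact add_mem hx.1 (add_mem (sub_mem (hRJ r hr y hy) hy) (mul_mem hx.1 hy))
  · have hyz := mul_mem hy hz
    rw [show (x + (r * y - y + x * y)) * z = x * z + (r * (y * z) - y * z + x * (y * z)) by
      noncomm_ring]
    simp only [map_add, map_sub, hx.2 z hz, hx.2 _ hyz, hl r hr _ hyz]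
    abel
  · simp only [map_add, map_sub, hx.2 y hy, hl r hr y hy]
    abel

lemma one_add_sub_one_mul_mem_pLambda (hRJ : ∀ r ∈ R, ∀ y ∈ J, (r : A) * y ∈ J)
    (hl : ∀ r ∈ R, ∀ y ∈ J, l ((r : A) * y) = l y) {p : A} (hp : p ∈ pLambda R J l)
    {n : Aˣ} (hn : n ∈ oneAddUnits J) : 1 + (p - 1) * n ∈ pLambda R J l := by
  obtain ⟨r, hr, x, hx, rfl⟩ := hp
  obtain ⟨x', hx', h, -⟩ := exists_mem_rightRadical_one_add_mul hRJ hl hr hx hn.1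
  exact ⟨r, hr, x', hx', by rwa [add_sub_cancel] at h⟩

lemma indicator_pLambda_one_add_sub_one_mul {β : Type*} [Zero β] {ξ : A → β}
    (hRJ : ∀ r ∈ R, ∀ y ∈ J, (r : A) * y ∈ J)
    (hl : ∀ r ∈ R, ∀ y ∈ J, l ((r : A) * y) = l y)
    (hξ : ∀ r ∈ R, ∀ x ∈ rightRadical J l, ∀ x' ∈ rightRadical J l, l x' = l x →
      ξ (r + x') = ξ (r + x))
    (p : A) {n : Aˣ} (hn : n ∈ oneAddUnits J) :
    (pLambda R J l).indicator ξ (1 + (p - 1) * n) = (pLambda R J l).indicator ξ p := by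
  by_cases hp : p ∈ pLambda R J l
  · rw [Set.indicator_of_mem hp,
      Set.indicator_of_mem (one_add_sub_one_mul_mem_pLambda hRJ hl hp hn)]
    obtain ⟨r, hr, x, hx, rfl⟩ := hp
    obtain ⟨x', hx', h, hlx⟩ := exists_mem_rightRadical_one_add_mul hRJ hl hr hx hn.1
    rw [add_sub_cancel] at h
    rw [h, hξ r hr x hx x' hx' hlx]
  · have hp' : 1 + (p - 1) * n ∉ pLambda R J l := fun h => hp <| by
      simpa [mul_assoc] using one_add_sub_one_mul_mem_pLambda hRJ hl h (inv_mem hn)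
    rw [Set.indicator_of_notMem hp, Set.indicator_of_notMem hp']

end PLambda

theorem stmt7_general (F : Type) [Field F]
    (A : Type) [Ring A] [Algebra F A] [Fintype A]
    (J : NonUnitalSubalgebra F A)
    (hnil : ∀ x ∈ J, IsNilpotent x)
    (R : Subgroup Aˣ)
    -- `J` is invariant under left and right multiplication by elements of `P`
    (hJinv : ∀ r ∈ R, ∀ x ∈ J, ((r : A) * x ∈ J) ∧ (x * (r : A) ∈ J))
    (l : A →ₗ[F] F)
    (Rcirc : Subgroup Aˣ) (hle : Rcirc ≤ R)
    -- `λ` is `R°`-bi-invariant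
    (hStab : ∀ r ∈ Rcirc, ∀ x ∈ J, l ((r : A) * x) = l x ∧ l (x * (r : A)) = l x)
    (ε : AddChar F ℂ)
    (θ : Rcirc → ℂ)
    (ξ : A → ℂ)
    -- `ξ = ξ_{λ,θ}` on `P_λ = R°(1 + J_{λ,rt})`
    (hξ : ∀ (r : Aˣ) (hr : r ∈ Rcirc), ∀ x : A, (x ∈ J ∧ ∀ y ∈ J, l (x * y) = 0) →
      ξ ((r : A) + x) = θ ⟨r, hr⟩ * ε (l x)) :
    ∀ g g' : A,
      -- `g ∈ P = RN`
      (∃ r ∈ R, ∃ x ∈ J, g = (r : A) * (1 + x)) →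
      -- `g' ∈ K(g)`
      (∃ r ∈ R, ∃ a ∈ {a : A | ∃ x ∈ J, a = 1 + x}, ∃ b ∈ {a : A | ∃ x ∈ J, a = 1 + x},
        g' = 1 + (r : A) * a * (g - 1) * b * ((r⁻¹ : Aˣ) : A)) →
      -- the induced characters agree: `χ(g') = χ(g)`
      ((Nat.card {p : A // ∃ r ∈ Rcirc, ∃ x : A,
            (x ∈ J ∧ ∀ y ∈ J, l (x * y) = 0) ∧ p = (r : A) + x} : ℂ)⁻¹ *
          ∑ᶠ s ∈ {s : Aˣ | ∃ r ∈ R, ∃ x ∈ J, (s : A) = (r : A) * (1 + x)},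
            (if ∃ r ∈ Rcirc, ∃ x : A, (x ∈ J ∧ ∀ y ∈ J, l (x * y) = 0) ∧
                ((s⁻¹ : Aˣ) : A) * g' * (s : A) = (r : A) + x
              then ξ (((s⁻¹ : Aˣ) : A) * g' * (s : A)) else 0))
        = ((Nat.card {p : A // ∃ r ∈ Rcirc, ∃ x : A,
            (x ∈ J ∧ ∀ y ∈ J, l (x * y) = 0) ∧ p = (r : A) + x} : ℂ)⁻¹ *
          ∑ᶠ s ∈ {s : Aˣ | ∃ r ∈ R, ∃ x ∈ J, (s : A) = (r : A) * (1 + x)},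
            (if ∃ r ∈ Rcirc, ∃ x : A, (x ∈ J ∧ ∀ y ∈ J, l (x * y) = 0) ∧
                ((s⁻¹ : Aˣ) : A) * g * (s : A) = (r : A) + x
              then ξ (((s⁻¹ : Aˣ) : A) * g * (s : A)) else 0)) := by
  rintro g g' - ⟨r, hr, a, ⟨x, hx, rfl⟩, b, ⟨y, hy, rfl⟩, rfl⟩
  rw [setOf_mul_one_add_eq_sup hnil hJinv]
  simp only [ite_eq_indicator_pLambda]
  change _ * inducedChar _ (pLambda Rcirc J l) ξ _ = _ * inducedChar _ (pLambda Rcirc J l) ξ g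
  congr 1
  obtain ⟨u, hu, hux⟩ := exists_mem_oneAddUnits_val_eq hx (hnil x hx)
  obtain ⟨v, hv, hvy⟩ := exists_mem_oneAddUnits_val_eq hy (hnil y hy)
  have ht : r * u ∈ R ⊔ oneAddUnits J :=
    mul_mem (Subgroup.mem_sup_left hr) (Subgroup.mem_sup_right hu)
  have hconj : 1 + (r : A) * (1 + x) * (g - 1) * (1 + y) * ((r⁻¹ : Aˣ) : A)
      = ↑(r * u) * (1 + (g - 1) * ↑(v * u)) * ↑(r * u)⁻¹ := by
    simp [← hux, ← hvy, mul_add, add_mul, sub_mul, mul_sub, mul_assoc]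
  have hPN : R ⊔ oneAddUnits J ≤ Subgroup.normalizer (oneAddUnits J : Set Aˣ) :=
    sup_le (le_normalizer_oneAddUnits hJinv) Subgroup.le_normalizer
  have hQ := indicator_pLambda_one_add_sub_one_mul (ξ := ξ)
    (fun r hr y hy => (hJinv r (hle hr) y hy).1) (fun r hr y hy => (hStab r hr y hy).1)
    fun r hr x hx x' hx' hlx => by rw [hξ r hr x' hx', hξ r hr x hx, hlx]
  rw [hconj, inducedChar_conj _ _ ht, inducedChar_one_add_sub_one_mul hPN hQ (mul_mem hv hu)]

/-- the induced character `χ_{λ,θ} = Ind_{P_λ}^P ξ_{λ,θ}` is constant on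
each class `K(g) = {1 + r a (g−1) b r⁻¹ : r ∈ R, a,b ∈ N}` of `P = RN`. -/
theorem stmt7 (F : Type) [Field F] [Fintype F]
    (A : Type) [Ring A] [Algebra F A] [Fintype A]
    (J : NonUnitalSubalgebra F A)
    (hnil : ∀ x ∈ J, IsNilpotent x)
    (R : Subgroup Aˣ)
    -- `J` is invariant under left and right multiplication by elements of `P`
    (hJinv : ∀ r ∈ R, ∀ x ∈ J, ((r : A) * x ∈ J) ∧ (x * (r : A) ∈ J))
    (l : A →ₗ[F] F)
    (Rcirc : Subgroup Aˣ) (hle : Rcirc ≤ R)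
    -- `λ` is `R°`-bi-invariant
    (hStab : ∀ r ∈ Rcirc, ∀ x ∈ J, l ((r : A) * x) = l x ∧ l (x * (r : A)) = l x)
    (ε : AddChar F ℂ) (hε : ∃ t, ε t ≠ 1)
    (θ : Rcirc → ℂ)
    -- `θ` is the character of a representation `T` of `R°`
    (hθ : ∃ (d : ℕ) (T : Rcirc →* Matrix (Fin d) (Fin d) ℂ),
      ∀ r, θ r = Matrix.trace (T r))
    (ξ : A → ℂ)
    -- `ξ = ξ_{λ,θ}` on `P_λ = R°(1 + J_{λ,rt})`
    (hξ : ∀ (r : Aˣ) (hr : r ∈ Rcirc), ∀ x : A, (x ∈ J ∧ ∀ y ∈ J, l (x * y) = 0) →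
      ξ ((r : A) + x) = θ ⟨r, hr⟩ * ε (l x)) :
    ∀ g g' : A,
      -- `g ∈ P = RN`
      (∃ r ∈ R, ∃ x ∈ J, g = (r : A) * (1 + x)) →
      -- `g' ∈ K(g)`
      (∃ r ∈ R, ∃ a ∈ {a : A | ∃ x ∈ J, a = 1 + x}, ∃ b ∈ {a : A | ∃ x ∈ J, a = 1 + x},
        g' = 1 + (r : A) * a * (g - 1) * b * ((r⁻¹ : Aˣ) : A)) →
      -- the induced characters agree: `χ(g') = χ(g)`
      ((Nat.card {p : A // ∃ r ∈ Rcirc, ∃ x : A,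
            (x ∈ J ∧ ∀ y ∈ J, l (x * y) = 0) ∧ p = (r : A) + x} : ℂ)⁻¹ *
          ∑ᶠ s ∈ {s : Aˣ | ∃ r ∈ R, ∃ x ∈ J, (s : A) = (r : A) * (1 + x)},
            (if ∃ r ∈ Rcirc, ∃ x : A, (x ∈ J ∧ ∀ y ∈ J, l (x * y) = 0) ∧
                ((s⁻¹ : Aˣ) : A) * g' * (s : A) = (r : A) + x
              then ξ (((s⁻¹ : Aˣ) : A) * g' * (s : A)) else 0))
        = ((Nat.card {p : A // ∃ r ∈ Rcirc, ∃ x : A,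
            (x ∈ J ∧ ∀ y ∈ J, l (x * y) = 0) ∧ p = (r : A) + x} : ℂ)⁻¹ *
          ∑ᶠ s ∈ {s : Aˣ | ∃ r ∈ R, ∃ x ∈ J, (s : A) = (r : A) * (1 + x)},
            (if ∃ r ∈ Rcirc, ∃ x : A, (x ∈ J ∧ ∀ y ∈ J, l (x * y) = 0) ∧
                ((s⁻¹ : Aˣ) : A) * g * (s : A) = (r : A) + x
              then ξ (((s⁻¹ : Aˣ) : A) * g * (s : A)) else 0)) :=
  stmt7_general F A J hnil R hJinv l Rcirc hle hStab ε θ ξ hξ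
end

section
/- Let P be the parabolic subgroup of GL(n, F_q) of type (n₁,…,n_s), with Levi decomposition P = RN, R = GL(n₁)×…×GL(n_s), N = 1+J. Then every element x ∈ J is equivalent (under x ∼ raxbr⁻¹, r ∈ R, a,b ∈ N) to an element x_𝔻 associated with a block-rook placement 𝔻, i.e. a matrix supported on a union of non-attacking block-rooks A_k × A_ℓ (A_k ⊆ I_k, A_ℓ ⊆ I_ℓ, |A_k| = |A_ℓ|, k < ℓ) whose submatrix on each block-rook is invertible. -/
/-
Every `x ∈ J` is reduced, column by column from the left, to a monomial matrix in `J`, whose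
nonzero entries are then `1 × 1` block-rooks. Suppose the columns `j < C` are already monomial.
An entry `(v, C)` in a row with a pivot `(v, κ)`, `κ < C`, is cleared by adding a multiple of
column `κ` to column `C`: by right multiplication with `N` if `κ` lies in an earlier block
than `C`, and otherwise by conjugating with a transvection in `R`, whose row part only adds
row `C`, which vanishes on the columns `≤ C`. All but one of the remaining entries of column
`C` are cleared by row operations: from a later block by left multiplication with `N`, within
a block by conjugating with a transvection in `R`. Such a conjugation also subtracts column `a` from
column `b`, spoiling the pivot of column `a`; this is repaired by adding the pivot row of `b` to
the pivot row of `a`, a row operation in a strictly earlier block, so the recursion terminates.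
-/

open scoped BigOperators

noncomputable section

variable (F : Type) [Field F] [Fintype F] [DecidableEq F]

/-- The nilradical `J` of the parabolic subalgebra determined by the block map `f`:
strictly block upper triangular matrices. -/
def JSet {n s : ℕ} (f : Fin n → Fin s) : Set (Matrix (Fin n) (Fin n) F) :=
  {x | ∀ i j, ¬ f i < f j → x i j = 0}

/-- The unipotent radical `N = 1 + J`. -/
def NSet {n s : ℕ} (f : Fin n → Fin s) : Set (Matrix (Fin n) (Fin n) F) :=
  {a | ∃ x ∈ JSet F f, a = 1 + x}

/-- The Levi subgroup `R = GL(n₁) × … × GL(n_s)`: invertible block diagonal matrices. -/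
def RSet {n s : ℕ} (f : Fin n → Fin s) : Set (Matrix (Fin n) (Fin n) F) :=
  {r | IsUnit r ∧ ∀ i j, f i ≠ f j → r i j = 0}

/-- Equivalence on `J`: `x ∼ r a x b r⁻¹` for `r ∈ R`, `a, b ∈ N`. -/
def EquivJ {n s : ℕ} (f : Fin n → Fin s) (x x' : Matrix (Fin n) (Fin n) F) : Prop :=
  ∃ r ∈ RSet F f, ∃ a ∈ NSet F f, ∃ b ∈ NSet F f, x' = r * a * x * b * r⁻¹

section

open Matrix

section Transvection

variable {ι R : Type*} [Fintype ι] [DecidableEq ι] [CommRing R]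

theorem transvection_mul_apply (i j : ι) (c : R) (M : Matrix ι ι R) (a b : ι) :
    (transvection i j c * M) a b = M a b + if a = i then c * M j b else 0 := by
  by_cases ha : a = i
  · subst ha
    simp
  · simp [ha]

theorem mul_transvection_apply (i j : ι) (c : R) (M : Matrix ι ι R) (a b : ι) :
    (M * transvection i j c) a b = M a b + if b = j then c * M a i else 0 := by
  by_cases hb : b = j
  · subst hb
    simp
  · simp [hb]

theorem transvection_mul_mul_transvection_neg_apply {i j : ι} {M : Matrix ι ι R} (hM : M j i = 0)
    (c : R) (a b : ι) :
    (transvection i j c * M * transvection i j (-c)) a b =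
      M a b + (if a = i then c * M j b else 0) - if b = j then c * M a i else 0 := by
  rw [mul_transvection_apply, transvection_mul_apply, transvection_mul_apply, hM]
  split_ifs <;> ring

end Transvection

variable {K : Type} [Field K] {n s : ℕ} {f : Fin n → Fin s}

def parabolic (f : Fin n → Fin s) : Set (Matrix (Fin n) (Fin n) K) :=
  {p | ∀ i j, f j < f i → p i j = 0}

theorem JSet_subset_parabolic : JSet K f ⊆ parabolic f :=
  fun _ hx i j h => hx i j (lt_asymm h)

theorem RSet_subset_parabolic : RSet K f ⊆ parabolic f :=
  fun _ hr i j h => hr.2 i j h.ne'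

theorem one_add_mem_parabolic {u : Matrix (Fin n) (Fin n) K} (hu : u ∈ JSet K f) :
    1 + u ∈ parabolic f := fun i j h => by
  rw [Matrix.add_apply, one_apply_ne fun hij => h.ne (by rw [hij]),
    JSet_subset_parabolic hu i j h, add_zero]

theorem mul_mem_JSet_left {p x : Matrix (Fin n) (Fin n) K} (hp : p ∈ parabolic f)
    (hx : x ∈ JSet K f) : p * x ∈ JSet K f := fun i j h => by
  rw [mul_apply]
  refine Finset.sum_eq_zero fun k _ => ?_
  rcases lt_or_ge (f i) (f k) with hik | hik
  · rw [hx k j fun hkj => h (hik.trans hkj), mul_zero]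
  · rcases hik.lt_or_eq with hik | hik
    · rw [hp i k hik, zero_mul]
    · rw [hx k j (hik ▸ h), mul_zero]

theorem mul_mem_JSet_right {x p : Matrix (Fin n) (Fin n) K} (hx : x ∈ JSet K f)
    (hp : p ∈ parabolic f) : x * p ∈ JSet K f := fun i j h => by
  rw [mul_apply]
  refine Finset.sum_eq_zero fun k _ => ?_
  rcases lt_or_ge (f k) (f j) with hkj | hkj
  · rw [hx i k fun hik => h (hik.trans hkj), zero_mul]
  · rcases hkj.lt_or_eq with hkj | hkj
    · rw [hp k j hkj, mul_zero]
    · rw [hx i k (hkj ▸ h), zero_mul]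

theorem add_mem_JSet {x y : Matrix (Fin n) (Fin n) K} (hx : x ∈ JSet K f) (hy : y ∈ JSet K f) :
    x + y ∈ JSet K f := fun i j h => by
  rw [Matrix.add_apply, hx i j h, hy i j h, add_zero]

theorem one_mem_NSet : (1 : Matrix (Fin n) (Fin n) K) ∈ NSet K f :=
  ⟨0, fun _ _ _ => rfl, (add_zero 1).symm⟩

theorem mul_mem_NSet {a b : Matrix (Fin n) (Fin n) K} (ha : a ∈ NSet K f) (hb : b ∈ NSet K f) :
    a * b ∈ NSet K f := by
  obtain ⟨u, hu, rfl⟩ := ha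
  obtain ⟨v, hv, rfl⟩ := hb
  refine ⟨u + v + u * v, ?_, by noncomm_ring⟩
  exact add_mem_JSet (add_mem_JSet hu hv)
    (mul_mem_JSet_left (JSet_subset_parabolic hu) hv)

theorem transvection_mem_NSet {i j : Fin n} (h : f i < f j) (c : K) :
    transvection i j c ∈ NSet K f := by
  refine ⟨single i j c, fun a b hab => ?_, rfl⟩
  rw [single_apply_of_ne]
  rintro ⟨rfl, rfl⟩
  exact hab h

theorem one_mem_RSet : (1 : Matrix (Fin n) (Fin n) K) ∈ RSet K f :=
  ⟨isUnit_one, fun _ _ h => one_apply_ne fun hij => h (by rw [hij])⟩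

theorem mul_mem_RSet {r r' : Matrix (Fin n) (Fin n) K} (hr : r ∈ RSet K f)
    (hr' : r' ∈ RSet K f) : r * r' ∈ RSet K f := by
  refine ⟨hr.1.mul hr'.1, fun i j h => ?_⟩
  rw [mul_apply]
  refine Finset.sum_eq_zero fun k _ => ?_
  by_cases hik : f i = f k
  · rw [hr'.2 k j (hik ▸ h), mul_zero]
  · rw [hr.2 i k hik, zero_mul]

/-- Masking `r⁻¹` to the diagonal blocks gives a right inverse of `r`, hence `r⁻¹` itself. -/
theorem inv_mem_RSet {r : Matrix (Fin n) (Fin n) K} (hr : r ∈ RSet K f) :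
    r⁻¹ ∈ RSet K f := by
  have hdet := (isUnit_iff_isUnit_det r).mp hr.1
  set w : Matrix (Fin n) (Fin n) K := of fun i j => if f i = f j then r⁻¹ i j else 0
  have hrw : r * w = 1 := by
    ext i j
    have hmask : (r * w) i j = if f i = f j then (r * r⁻¹) i j else 0 := by
      simp only [mul_apply, w, of_apply]
      split_ifs with hij
      · refine Finset.sum_congr rfl fun k _ => ?_
        by_cases hik : f i = f k
        · rw [if_pos (hik ▸ hij)]
        · rw [hr.2 i k hik, zero_mul, zero_mul]
      · refine Finset.sum_eq_zero fun k _ => ?_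
        by_cases hik : f i = f k
        · rw [if_neg (hik ▸ hij), mul_zero]
        · rw [hr.2 i k hik, zero_mul]
    rw [hmask, mul_nonsing_inv r hdet]
    split_ifs with hij
    · rfl
    · exact (one_apply_ne fun h => hij (by rw [h])).symm
  refine ⟨isUnit_nonsing_inv_iff.2 hr.1, fun i j h => ?_⟩
  rw [inv_eq_right_inv hrw]
  exact if_neg h

theorem transvection_mem_RSet {i j : Fin n} (hij : i ≠ j) (h : f i = f j) (c : K) :
    transvection i j c ∈ RSet K f := by
  refine ⟨(isUnit_iff_isUnit_det _).mpr (by simp [hij]), fun a b hab => ?_⟩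
  rw [transvection, Matrix.add_apply, one_apply_ne fun h' => hab (by rw [h']),
    single_apply_of_ne, add_zero]
  rintro ⟨rfl, rfl⟩
  exact hab h

theorem conj_mem_NSet {r a : Matrix (Fin n) (Fin n) K} (hr : r ∈ RSet K f) (ha : a ∈ NSet K f) :
    r⁻¹ * a * r ∈ NSet K f := by
  obtain ⟨u, hu, rfl⟩ := ha
  refine ⟨r⁻¹ * u * r, ?_, ?_⟩
  · exact mul_mem_JSet_right (mul_mem_JSet_left
      (RSet_subset_parabolic (inv_mem_RSet hr)) hu) (RSet_subset_parabolic hr)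
  · rw [Matrix.mul_add, Matrix.add_mul, Matrix.mul_one,
      nonsing_inv_mul r ((isUnit_iff_isUnit_det r).mp hr.1)]

namespace EquivJ

variable {x y z : Matrix (Fin n) (Fin n) K}

theorem refl (x : Matrix (Fin n) (Fin n) K) : EquivJ K f x x :=
  ⟨1, one_mem_RSet, 1, one_mem_NSet, 1, one_mem_NSet, by simp⟩

theorem trans (hxy : EquivJ K f x y) (hyz : EquivJ K f y z) : EquivJ K f x z := by
  obtain ⟨r, hr, a, ha, b, hb, rfl⟩ := hxy
  obtain ⟨r', hr', a', ha', b', hb', rfl⟩ := hyz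
  have hdet := (isUnit_iff_isUnit_det r).mp hr.1
  refine ⟨r' * r, mul_mem_RSet hr' hr, r⁻¹ * a' * r * a,
    mul_mem_NSet (conj_mem_NSet hr ha') ha, b * (r⁻¹ * b' * r),
    mul_mem_NSet hb (conj_mem_NSet hr hb'), ?_⟩
  simp only [Matrix.mul_inv_rev, Matrix.mul_assoc, mul_nonsing_inv_cancel_left _ _ hdet]

theorem mem_JSet (hxy : EquivJ K f x y) (hx : x ∈ JSet K f) : y ∈ JSet K f := by
  obtain ⟨r, hr, a, ha, b, hb, rfl⟩ := hxy
  obtain ⟨u, hu, rfl⟩ := ha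
  obtain ⟨v, hv, rfl⟩ := hb
  rw [Matrix.mul_assoc r]
  exact mul_mem_JSet_right (mul_mem_JSet_right (mul_mem_JSet_left
    (RSet_subset_parabolic hr) (mul_mem_JSet_left (one_add_mem_parabolic hu) hx))
    (one_add_mem_parabolic hv)) (RSet_subset_parabolic (inv_mem_RSet hr))

theorem of_mul_left {a : Matrix (Fin n) (Fin n) K} (ha : a ∈ NSet K f) : EquivJ K f x (a * x) :=
  ⟨1, one_mem_RSet, a, ha, 1, one_mem_NSet, by simp⟩

theorem of_mul_right {b : Matrix (Fin n) (Fin n) K} (hb : b ∈ NSet K f) : EquivJ K f x (x * b) :=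
  ⟨1, one_mem_RSet, 1, one_mem_NSet, b, hb, by simp⟩

theorem of_conj_transvection {i j : Fin n} (hij : i ≠ j) (h : f i = f j) (c : K) :
    EquivJ K f x (transvection i j c * x * transvection i j (-c)) := by
  have hinv : transvection i j c * transvection i j (-c) = 1 := by
    rw [transvection_mul_transvection_same _ _ hij, add_neg_cancel, transvection_zero]
  refine ⟨transvection i j c, transvection_mem_RSet hij h c, 1, one_mem_NSet, 1, one_mem_NSet,
    ?_⟩
  rw [inv_eq_right_inv hinv]
  simp

end EquivJ

variable {x : Matrix (Fin n) (Fin n) K}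

theorem eq_zero_of_le_of_mem_JSet (hmono : Monotone f) (hx : x ∈ JSet K f) {i j : Fin n}
    (hji : j ≤ i) : x i j = 0 :=
  hx i j (hmono hji).not_gt

theorem lt_of_mem_JSet (hx : x ∈ JSet K f) {i j : Fin n} (hij : x i j ≠ 0) : f i < f j :=
  by_contra fun h => hij (hx i j h)

def MonomialUpTo (c : ℕ) (x : Matrix (Fin n) (Fin n) K) : Prop :=
  (∀ j : Fin n, (j : ℕ) < c → {i | x i j ≠ 0}.Subsingleton) ∧
    ∀ i, {j : Fin n | (j : ℕ) < c ∧ x i j ≠ 0}.Subsingleton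

theorem monomialUpTo_zero (x : Matrix (Fin n) (Fin n) K) : MonomialUpTo 0 x :=
  ⟨fun _ h => absurd h (Nat.not_lt_zero _), fun _ _ h => absurd h.1 (Nat.not_lt_zero _)⟩

def PivotRowsVanishAt (C : Fin n) (x : Matrix (Fin n) (Fin n) K) : Prop :=
  ∀ i j, j < C → x i j ≠ 0 → x i C = 0

def RowAddable (f : Fin n → Fin s) (C : Fin n) (x : Matrix (Fin n) (Fin n) K) (a b : Fin n) :
    Prop :=
  ∀ t : K, ∃ y, EquivJ K f x y ∧
    ∀ i j, j ≤ C → y i j = x i j + if i = a then t * x b j else 0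

theorem rowAddable_of_lt {C a b : Fin n} (h : f a < f b) : RowAddable f C x a b := fun t =>
  ⟨transvection a b t * x, .of_mul_left (transvection_mem_NSet h t),
    fun i j _ => transvection_mul_apply a b t x i j⟩

theorem rowAddable_of_col_eq_zero {C a b : Fin n} (hab : a ≠ b) (hf : f a = f b)
    (hcol : ∀ i, x i a = 0) : RowAddable f C x a b := fun t =>
  ⟨_, .of_conj_transvection hab hf t, fun i j _ => by
    rw [transvection_mul_mul_transvection_neg_apply (hcol b), hcol i, mul_zero, ite_self,
      sub_zero]⟩

/-- Adding row `b` to row `a` by a conjugation in `R` also subtracts column `a` from column `b`;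
the pivot of column `a`, in row `p`, is then cleared by adding row `q`, the pivot row of
column `b`, to row `p`. -/
theorem RowAddable.of_pivots {C a b p q : Fin n} (hx : x ∈ JSet K f) (hab : a ≠ b)
    (hf : f a = f b) (hpa : f p < f a) (hcol : ∀ i, i ≠ p → x i a = 0) (hq : x q b ≠ 0)
    (hrow : ∀ j ≤ C, j ≠ b → x q j = 0) (ha : a ≤ C) (hpq : RowAddable f C x p q) :
    RowAddable f C x a b := by
  intro t
  have hpa' : p ≠ a := fun h => hpa.ne (by rw [h])
  have hpb : p ≠ b := fun h => hpa.ne (by rw [h, hf])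
  obtain ⟨y, hxy, hy⟩ := hpq (t * x p a / x q b)
  have hyba : y b a = 0 := by
    rw [hy b a ha, if_neg hpb.symm, hx b a hf.symm.not_lt, add_zero]
  refine ⟨_, hxy.trans (.of_conj_transvection hab hf t), fun i j hj => ?_⟩
  rw [transvection_mul_mul_transvection_neg_apply hyba, hy i j hj, hy b j hj, hy i a ha,
    if_neg hpb.symm, hrow a ha hab]
  by_cases hjb : j = b
  · subst hjb
    by_cases hip : i = p
    · subst hip
      simp [hpa', div_mul_cancel₀ _ hq]
    · simp [hip, hcol i hip]
  · simp [hjb, hrow j hj hjb]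

theorem MonomialUpTo.eq_zero_of_pivot {C : Fin n} (hmon : MonomialUpTo C x)
    (hpiv : PivotRowsVanishAt C x) {i j : Fin n} (hj : j < C) (hij : x i j ≠ 0)
    {j' : Fin n} (hj' : j' ≤ C) (hjj' : j' ≠ j) : x i j' = 0 := by
  rcases hj'.lt_or_eq with hj' | rfl
  · exact by_contra fun h => hjj' (hmon.2 i ⟨hj', h⟩ ⟨hj, hij⟩)
  · exact hpiv i j hj hij

/-- The recursion follows the pivots of the columns `a, b` into strictly earlier blocks. -/
theorem rowAddable_or_rowAddable (hmono : Monotone f) (hx : x ∈ JSet K f) {C : Fin n}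
    (hmon : MonomialUpTo C x) (hpiv : PivotRowsVanishAt C x) {a b : Fin n}
    (hab : a ≠ b) (hf : f a = f b) (ha : a < C) (hb : b < C) :
    RowAddable f C x a b ∨ RowAddable f C x b a := by
  by_cases hcola : ∀ i, x i a = 0
  · exact .inl (rowAddable_of_col_eq_zero hab hf hcola)
  by_cases hcolb : ∀ i, x i b = 0
  · exact .inr (rowAddable_of_col_eq_zero hab.symm hf.symm hcolb)
  obtain ⟨p, hp⟩ := not_forall.1 hcola
  obtain ⟨q, hq⟩ := not_forall.1 hcolb
  have hpa : f p < f a := lt_of_mem_JSet hx hp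
  have hqb : f q < f b := lt_of_mem_JSet hx hq
  have hcolp : ∀ i, i ≠ p → x i a = 0 := fun i hi => by_contra fun h => hi (hmon.1 a ha h hp)
  have hcolq : ∀ i, i ≠ q → x i b = 0 := fun i hi => by_contra fun h => hi (hmon.1 b hb h hq)
  have hrowp := fun j (hj : j ≤ C) => hmon.eq_zero_of_pivot hpiv ha hp hj
  have hrowq := fun j (hj : j ≤ C) => hmon.eq_zero_of_pivot hpiv hb hq hj
  have hpq_ab : RowAddable f C x p q → RowAddable f C x a b :=
    RowAddable.of_pivots hx hab hf hpa hcolp hq hrowq ha.le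
  have hqp_ba : RowAddable f C x q p → RowAddable f C x b a :=
    RowAddable.of_pivots hx hab.symm hf.symm hqb hcolq hp hrowp hb.le
  rcases lt_trichotomy (f p) (f q) with hpq | hpq | hpq
  · exact .inl (hpq_ab (rowAddable_of_lt hpq))
  · have hpq' : p ≠ q := by
      rintro rfl
      exact hab (hmon.2 p ⟨ha, hp⟩ ⟨hb, hq⟩)
    exact (rowAddable_or_rowAddable hmono hx hmon hpiv hpq' hpq
      ((hmono.reflect_lt hpa).trans ha) ((hmono.reflect_lt hqb).trans hb)).imp hpq_ab hqp_ba
  · exact .inr (hqp_ba (rowAddable_of_lt hpq))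
termination_by f a
decreasing_by exact hpa

def ClearsEntry (C v : Fin n) (x y : Matrix (Fin n) (Fin n) K) : Prop :=
  ∀ i j, j ≤ C → y i j = if i = v ∧ j = C then 0 else x i j

theorem ClearsEntry.apply_of_lt {C v : Fin n} {y : Matrix (Fin n) (Fin n) K}
    (h : ClearsEntry C v x y) {i j : Fin n} (hj : j < C) : y i j = x i j := by
  rw [h i j hj.le, if_neg fun h' => hj.ne h'.2]

theorem MonomialUpTo.of_clearsEntry {C v : Fin n} {y : Matrix (Fin n) (Fin n) K}
    (hmon : MonomialUpTo C x) (h : ClearsEntry C v x y) : MonomialUpTo C y := by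
  refine ⟨fun j hj i hi i' hi' => hmon.1 j hj ?_ ?_,
    fun i j hj j' hj' => hmon.2 i ⟨hj.1, ?_⟩ ⟨hj'.1, ?_⟩⟩
  · exact fun h0 => hi (by rw [h.apply_of_lt hj]; exact h0)
  · exact fun h0 => hi' (by rw [h.apply_of_lt hj]; exact h0)
  · exact fun h0 => hj.2 (by rw [h.apply_of_lt hj.1]; exact h0)
  · exact fun h0 => hj'.2 (by rw [h.apply_of_lt hj'.1]; exact h0)

theorem ClearsEntry.ncard_lt {C v : Fin n} {y : Matrix (Fin n) (Fin n) K}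
    (h : ClearsEntry C v x y) (hv : x v C ≠ 0) :
    {i | y i C ≠ 0}.ncard < {i | x i C ≠ 0}.ncard := by
  refine Set.ncard_lt_ncard ⟨fun i hi => ?_, fun hsub => ?_⟩
  · have hi' : y i C ≠ 0 := hi
    rw [h i C le_rfl] at hi'
    split_ifs at hi' with hiv
    · exact absurd rfl hi'
    · exact hi'
  · exact hsub (show x v C ≠ 0 from hv) (by simp [h v C le_rfl])

theorem exists_equivJ_colAdd (hmono : Monotone f) (hx : x ∈ JSet K f) {κ C : Fin n}
    (hκ : κ < C) (t : K) :
    ∃ y, EquivJ K f x y ∧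
      ∀ i j, j ≤ C → y i j = x i j + if j = C then t * x i κ else 0 := by
  rcases (hmono hκ.le).lt_or_eq with hlt | heq
  · exact ⟨x * transvection κ C t, .of_mul_right (transvection_mem_NSet hlt t),
      fun i j _ => mul_transvection_apply κ C t x i j⟩
  · -- the row operation hidden in the conjugation only adds row `C`, which vanishes on `j ≤ C`
    refine ⟨_, .of_conj_transvection hκ.ne heq (-t), fun i j hj => ?_⟩
    rw [transvection_mul_mul_transvection_neg_apply (eq_zero_of_le_of_mem_JSet hmono hx hκ.le),
      eq_zero_of_le_of_mem_JSet hmono hx hj]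
    split_ifs <;> ring

theorem exists_clearsEntry_of_pivot (hmono : Monotone f) (hx : x ∈ JSet K f) {C : Fin n}
    (hmon : MonomialUpTo C x) {v κ : Fin n} (hκ : κ < C) (hvκ : x v κ ≠ 0) :
    ∃ y, EquivJ K f x y ∧ ClearsEntry C v x y := by
  obtain ⟨y, hxy, hy⟩ := exists_equivJ_colAdd hmono hx hκ (-x v C / x v κ)
  refine ⟨y, hxy, fun i j hj => ?_⟩
  rw [hy i j hj]
  by_cases hjC : j = C
  · subst hjC
    by_cases hiv : i = v
    · subst hiv
      simp [div_mul_cancel₀ _ hvκ]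
    · simp [hiv, by_contra fun h => hiv (hmon.1 κ hκ h hvκ)]
  · simp [hjC]

theorem RowAddable.exists_clearsEntry {C v w : Fin n} (h : RowAddable f C x v w)
    (hw : x w C ≠ 0) (hroww : ∀ j < C, x w j = 0) :
    ∃ y, EquivJ K f x y ∧ ClearsEntry C v x y := by
  obtain ⟨y, hxy, hy⟩ := h (-x v C / x w C)
  refine ⟨y, hxy, fun i j hj => ?_⟩
  rw [hy i j hj]
  by_cases hiv : i = v
  · subst hiv
    rcases hj.lt_or_eq with hj | rfl
    · simp [hj.ne, hroww j hj]
    · simp [div_mul_cancel₀ _ hw]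
  · simp [hiv]

theorem exists_clearsEntry_of_two (hmono : Monotone f) (hx : x ∈ JSet K f) {C : Fin n}
    (hmon : MonomialUpTo C x) (hpiv : PivotRowsVanishAt C x) {v w : Fin n}
    (hvw : v ≠ w) (hv : x v C ≠ 0) (hw : x w C ≠ 0) :
    ∃ u, x u C ≠ 0 ∧ ∃ y, EquivJ K f x y ∧ ClearsEntry C u x y := by
  have hrowv : ∀ j < C, x v j = 0 := fun j hj => by_contra fun h => hv (hpiv v j hj h)
  have hroww : ∀ j < C, x w j = 0 := fun j hj => by_contra fun h => hw (hpiv w j hj h)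
  rcases lt_trichotomy (f v) (f w) with hf | hf | hf
  · exact ⟨v, hv, (rowAddable_of_lt hf).exists_clearsEntry hw hroww⟩
  · have hvC := hmono.reflect_lt (lt_of_mem_JSet hx hv)
    have hwC := hmono.reflect_lt (lt_of_mem_JSet hx hw)
    rcases rowAddable_or_rowAddable hmono hx hmon hpiv hvw hf hvC hwC with h | h
    · exact ⟨v, hv, h.exists_clearsEntry hw hroww⟩
    · exact ⟨w, hw, h.exists_clearsEntry hv hrowv⟩
  · exact ⟨w, hw, (rowAddable_of_lt hf).exists_clearsEntry hv hrowv⟩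

theorem MonomialUpTo.succ {C : Fin n} (hmon : MonomialUpTo C x)
    (hpiv : PivotRowsVanishAt C x) (hcol : {i | x i C ≠ 0}.Subsingleton) :
    MonomialUpTo (C + 1) x := by
  refine ⟨fun j hj => ?_, fun i j hj j' hj' => ?_⟩
  · rcases (Nat.lt_succ_iff.1 hj).lt_or_eq with hj | hj
    · exact hmon.1 j hj
    · rwa [Fin.ext hj]
  · obtain ⟨hj, hij⟩ := hj
    obtain ⟨hj', hij'⟩ := hj'
    rcases (Nat.lt_succ_iff.1 hj).lt_or_eq with hj | hj <;>
      rcases (Nat.lt_succ_iff.1 hj').lt_or_eq with hj' | hj'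
    · exact hmon.2 i ⟨hj, hij⟩ ⟨hj', hij'⟩
    · exact absurd (Fin.ext hj' ▸ hpiv i j hj hij) hij'
    · exact absurd (Fin.ext hj ▸ hpiv i j' hj' hij') hij
    · exact Fin.ext (hj.trans hj'.symm)

theorem exists_equivJ_monomialUpTo_succ (hmono : Monotone f) {C : Fin n} (hx : x ∈ JSet K f)
    (hmon : MonomialUpTo C x) : ∃ y, EquivJ K f x y ∧ MonomialUpTo (C + 1) y := by
  induction hk : {i | x i C ≠ 0}.ncard using Nat.strong_induction_on generalizing x with
  | _ k ih =>
  have descend : ∀ v y, x v C ≠ 0 → EquivJ K f x y → ClearsEntry C v x y →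
      ∃ z, EquivJ K f x z ∧ MonomialUpTo (C + 1) z := fun v y hv hxy hy => by
    obtain ⟨z, hyz, hz⟩ :=
      ih _ (hk ▸ ClearsEntry.ncard_lt hy hv) (hxy.mem_JSet hx) (hmon.of_clearsEntry hy) rfl
    exact ⟨z, hxy.trans hyz, hz⟩
  by_cases hpiv : PivotRowsVanishAt C x
  · by_cases hcol : {i | x i C ≠ 0}.Subsingleton
    · exact ⟨x, .refl x, hmon.succ hpiv hcol⟩
    · obtain ⟨v, hv, w, hw, hvw⟩ := Set.not_subsingleton_iff.1 hcol
      obtain ⟨u, hu, y, hxy, hy⟩ := exists_clearsEntry_of_two hmono hx hmon hpiv hvw hv hw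
      exact descend u y hu hxy hy
  · simp only [PivotRowsVanishAt, not_forall] at hpiv
    obtain ⟨v, κ, hκ, hvκ, hv⟩ := hpiv
    obtain ⟨y, hxy, hy⟩ := exists_clearsEntry_of_pivot hmono hx hmon hκ hvκ
    exact descend v y hv hxy hy

theorem exists_equivJ_monomial (hmono : Monotone f) (hx : x ∈ JSet K f) :
    ∃ y, EquivJ K f x y ∧ MonomialUpTo n y := by
  suffices ∀ c ≤ n, ∃ y, EquivJ K f x y ∧ MonomialUpTo c y from this n le_rfl
  intro c
  induction c with
  | zero => exact fun _ => ⟨x, .refl x, monomialUpTo_zero x⟩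
  | succ c ih =>
    intro hc
    obtain ⟨y, hxy, hy⟩ := ih (Nat.le_of_succ_le hc)
    obtain ⟨z, hyz, hz⟩ :=
      exists_equivJ_monomialUpTo_succ hmono (C := ⟨c, hc⟩) (hxy.mem_JSet hx) hy
    exact ⟨z, hxy.trans hyz, hz⟩

/-- `x = x_𝔻` for a block-rook placement `𝔻 = ⋃ₜ A t × B t`. -/
def IsBlockRookElement (f : Fin n → Fin s) (x : Matrix (Fin n) (Fin n) K) : Prop :=
  ∃ (m : ℕ) (A B : Fin m → Finset (Fin n)) (hc : ∀ t, (B t).card = (A t).card),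
    (∀ t, ∃ k l : Fin s, k < l ∧ (∀ i ∈ A t, f i = k) ∧ (∀ j ∈ B t, f j = l)) ∧
    (∀ t t', t ≠ t' → Disjoint (A t) (A t')) ∧
    (∀ t t', t ≠ t' → Disjoint (B t) (B t')) ∧
    (∀ i j, x i j ≠ 0 → ∃ t, i ∈ A t ∧ j ∈ B t) ∧
    ∀ t, IsUnit (Matrix.of fun (a b : Fin (A t).card) =>
      x (((A t).orderIsoOfFin rfl a : Fin n)) (((B t).orderIsoOfFin (hc t) b : Fin n)))

/-- The placement consists of the `1 × 1` block-rooks at the nonzero entries. -/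
theorem isBlockRookElement_of_monomial (hx : x ∈ JSet K f) (hmon : MonomialUpTo n x) :
    IsBlockRookElement f x := by
  classical
  set S := Finset.univ.filter fun p : Fin n × Fin n => x p.1 p.2 ≠ 0
  set e : Fin S.card → Fin n × Fin n := fun t => S.equivFin.symm t
  have hne : ∀ t, x (e t).1 (e t).2 ≠ 0 := fun t =>
    (Finset.mem_filter.1 (S.equivFin.symm t).2).2
  have he : Function.Injective e := fun t t' h => S.equivFin.symm.injective (Subtype.ext h)
  refine ⟨S.card, fun t => {(e t).1}, fun t => {(e t).2}, fun t => rfl, fun t => ?_,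
    fun t t' htt' => ?_, fun t t' htt' => ?_, fun i j hij => ?_, fun t => ?_⟩
  · exact ⟨_, _, lt_of_mem_JSet hx (hne t), by simp, by simp⟩
  · refine Finset.disjoint_singleton.2 fun h => htt' (he (Prod.ext h ?_))
    exact hmon.2 (e t).1 ⟨(e t).2.isLt, hne t⟩ ⟨(e t').2.isLt, h ▸ hne t'⟩
  · refine Finset.disjoint_singleton.2 fun h => htt' (he (Prod.ext ?_ h))
    exact hmon.1 (e t).2 (e t).2.isLt (hne t) (h ▸ hne t')
  · have hS : (i, j) ∈ S := Finset.mem_filter.2 ⟨Finset.mem_univ _, hij⟩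
    refine ⟨S.equivFin ⟨(i, j), hS⟩, ?_, ?_⟩ <;> simp [e]
  · let : Unique (Fin ({(e t).1} : Finset (Fin n)).card) := inferInstanceAs (Unique (Fin 1))
    rw [isUnit_iff_isUnit_det, det_unique, isUnit_iff_ne_zero, of_apply]
    convert hne t using 2 <;> exact Finset.mem_singleton.1 (Subtype.prop _)

end

theorem stmt8 {n s : ℕ} (f : Fin n → Fin s)
    (hmono : Monotone f) :
    ∀ x ∈ JSet F f,
      ∃ (m : ℕ) (A B : Fin m → Finset (Fin n)) (hc : ∀ t, (B t).card = (A t).card),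
        -- each block-rook lies in a single block `I_k × I_ℓ` with `k < ℓ`
        (∀ t, ∃ k l : Fin s, k < l ∧ (∀ i ∈ A t, f i = k) ∧ (∀ j ∈ B t, f j = l)) ∧
        -- the block-rooks do not attack each other
        (∀ t t', t ≠ t' → Disjoint (A t) (A t')) ∧
        (∀ t t', t ≠ t' → Disjoint (B t) (B t')) ∧
        ∃ x' : Matrix (Fin n) (Fin n) F,
          -- `x'` is supported on the union of the block-rooks
          (∀ i j, x' i j ≠ 0 → ∃ t, i ∈ A t ∧ j ∈ B t) ∧
          -- each block-rook submatrix of `x'` is invertible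
          (∀ t, IsUnit (Matrix.of fun (a b : Fin (A t).card) =>
            x' (((A t).orderIsoOfFin rfl a : Fin n)) (((B t).orderIsoOfFin (hc t) b : Fin n)))) ∧
          EquivJ F f x x' := by
  intro x hx
  obtain ⟨y, hxy, hy⟩ := exists_equivJ_monomial hmono hx
  obtain ⟨m, A, B, hc, hblock, hA, hB, hsupp, hunit⟩ :=
    isBlockRookElement_of_monomial (hxy.mem_JSet hx) hy
  exact ⟨m, A, B, hc, hblock, hA, hB, y, hsupp, hunit, hxy⟩
end
end

section
/- Let P = RN be a parabolic subgroup of GL(n,F_q), 𝔻 a block-rook placement with associated λ_𝔻 ∈ J*, and J_{𝔻,rt} = {x ∈ J : λ_𝔻(xJ) = 0}. Say a root α = (i,j) ∈ Δ_J is subordinated to 𝔻 if there is a root (i,k) ∈ 𝔻 with the block-column of (i,j) preceding that of (i,k). Then J_{𝔻,rt} is spanned by the matrix units E_α with α ∈ Δ_J not subordinated to 𝔻. -/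
open scoped BigOperators

noncomputable section

variable (F : Type) [Field F] [Fintype F] [DecidableEq F]

/-- The linear form on matrices with coefficient matrix `Λ`:
`λ(x) = ∑_{i,j} Λ_{ij} x_{ij}`. -/
def lamOf {n : ℕ} (Λ x : Matrix (Fin n) (Fin n) F) : F :=
  ∑ i, ∑ j, Λ i j * x i j

/-!
Since `λ_𝔻(x E_{pj}) = ∑_i Λ_{ij} x_{ip}` and the columns of `Λ` in the block-column of a
block-rook `A × B` are supported in the rows `A`, the condition `λ_𝔻(x E_{pj}) = 0` for all
`j ∈ B` says that the column `(x_{ip})_{i ∈ A}` lies in the left kernel of the invertible block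
`Λ_{A,B}`, so it vanishes. Applied to every `E_{pj} ∈ J` this kills exactly the subordinated
entries of `x`; conversely, if `x` vanishes there, then each term `Λ_{ij} x_{ip} y_{pj}` of
`λ_𝔻(xy)` vanishes for `y ∈ J`.
-/

namespace Matrix

variable {R m n : Type*} [Semiring R] [Fintype m] [Fintype n] [DecidableEq m] [DecidableEq n]

theorem span_single_one_eq_setOf (p : m → n → Prop) :
    (Submodule.span R {E : Matrix m n R | ∃ i j, p i j ∧ E = single i j 1} : Set (Matrix m n R)) =
      {x | ∀ i j, ¬ p i j → x i j = 0} := by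
  ext x
  constructor
  · intro hx
    induction hx using Submodule.span_induction with
    | mem E hE =>
      obtain ⟨i, j, hij, rfl⟩ := hE
      intro i' j' hij'
      exact single_apply_of_ne _ _ _ _ _ fun ⟨hi, hj⟩ => hij' (hi ▸ hj ▸ hij)
    | zero => intro i j _; rfl
    | add a b _ _ ha hb => intro i j h; simp [ha i j h, hb i j h]
    | smul c a _ ha => intro i j h; simp [ha i j h]
  · intro hx
    rw [SetLike.mem_coe, matrix_eq_sum_single x]
    refine Submodule.sum_mem _ fun i _ => Submodule.sum_mem _ fun j _ => ?_
    by_cases hij : p i j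
    · rw [← mul_one (x i j), ← smul_eq_mul, ← smul_single]
      exact Submodule.smul_mem _ _ (Submodule.subset_span ⟨i, j, hij, rfl⟩)
    · simp [hx i j hij]

end Matrix

theorem Matrix.eq_zero_of_sum_mul_eq_zero_of_isUnit {K ι : Type*} [Field K] [LinearOrder ι]
    {A B : Finset ι} (hc : B.card = A.card) {Λ : Matrix ι ι K}
    (hΛ : IsUnit (Matrix.of fun (a b : Fin A.card) =>
      Λ ((A.orderIsoOfFin rfl a : ι)) ((B.orderIsoOfFin hc b : ι))))
    {v : ι → K} (hv : ∀ j ∈ B, ∑ i ∈ A, Λ i j * v i = 0) : ∀ i ∈ A, v i = 0 := by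
  set e := A.orderIsoOfFin rfl
  set M : Matrix (Fin A.card) (Fin A.card) K :=
    Matrix.of fun a b => Λ (e a) (B.orderIsoOfFin hc b)
  have hw : Matrix.vecMul (fun a => v (e a)) M = Matrix.vecMul 0 M := by
    ext b
    rw [Matrix.zero_vecMul, Pi.zero_apply, ← hv _ (B.orderIsoOfFin hc b).2,
      ← Finset.sum_coe_sort A, ← e.toEquiv.sum_comp, Matrix.vecMul, dotProduct]
    exact Finset.sum_congr rfl fun a _ => mul_comm _ _
  intro i hi
  simpa using congrFun (Matrix.vecMul_injective_iff_isUnit.2 hΛ hw) (e.symm ⟨i, hi⟩)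

theorem Matrix.sum_mul_eq_sum_rook_rows {K ι τ : Type*} [NonUnitalNonAssocSemiring K]
    [Fintype ι] {A B : τ → Finset ι} {Λ : Matrix ι ι K}
    (hsupp : ∀ i j, Λ i j ≠ 0 → ∃ t, i ∈ A t ∧ j ∈ B t)
    (hdisjB : ∀ t t', t ≠ t' → Disjoint (B t) (B t')) {t : τ} {j : ι} (hj : j ∈ B t)
    (v : ι → K) : ∑ i, Λ i j * v i = ∑ i ∈ A t, Λ i j * v i := by
  refine (Finset.sum_subset (Finset.subset_univ _) fun i _ hi => ?_).symm
  by_contra hne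
  obtain ⟨t', hi', hj'⟩ := hsupp i j (left_ne_zero_of_mul hne)
  obtain rfl : t' = t := by_contra fun h => Finset.disjoint_left.mp (hdisjB t' t h) hj' hj
  exact hi hi'

section

variable {K : Type} [Field K] {n s : ℕ}

theorem lamOf_mul_single (Λ x : Matrix (Fin n) (Fin n) K) (p j : Fin n) :
    lamOf K Λ (x * Matrix.single p j 1) = ∑ i, Λ i j * x i p := by
  rw [lamOf]
  refine Finset.sum_congr rfl fun i _ => ?_
  rw [Finset.sum_eq_single j (fun j' _ hj' => by simp [hj']) (by simp),
    Matrix.mul_single_apply_same, mul_one]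

theorem single_mem_JSet {f : Fin n → Fin s} {p j : Fin n} (h : f p < f j) :
    Matrix.single p j 1 ∈ JSet K f := fun _ _ h' =>
  Matrix.single_apply_of_ne _ _ _ _ _ fun ⟨hi, hj⟩ => h' (hi ▸ hj ▸ h)

theorem lamOf_mul_eq_zero {f : Fin n → Fin s} {m : ℕ} {A B : Fin m → Finset (Fin n)}
    {Λ x y : Matrix (Fin n) (Fin n) K} (hsupp : ∀ i j, Λ i j ≠ 0 → ∃ t, i ∈ A t ∧ j ∈ B t)
    (hx : ∀ i p, (∃ t, i ∈ A t ∧ ∃ k ∈ B t, f p < f k) → x i p = 0) (hy : y ∈ JSet K f) :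
    lamOf K Λ (x * y) = 0 := by
  refine Finset.sum_eq_zero fun i _ => Finset.sum_eq_zero fun j _ => ?_
  by_cases hΛ : Λ i j = 0
  · rw [hΛ, zero_mul]
  obtain ⟨t, hi, hj⟩ := hsupp i j hΛ
  rw [Matrix.mul_apply, Finset.sum_eq_zero, mul_zero]
  intro p _
  by_cases hpj : f p < f j
  · rw [hx i p ⟨t, hi, j, hj, hpj⟩, zero_mul]
  · rw [hy p j hpj, mul_zero]

end

theorem stmt11 {n s : ℕ} (f : Fin n → Fin s)
    (m : ℕ) (A B : Fin m → Finset (Fin n)) (hc : ∀ t, (B t).card = (A t).card)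
    (hblocks : ∀ t, ∃ k l : Fin s, k < l ∧ (∀ i ∈ A t, f i = k) ∧ (∀ j ∈ B t, f j = l))
    (hdisjB : ∀ t t', t ≠ t' → Disjoint (B t) (B t'))
    (Λ : Matrix (Fin n) (Fin n) F)
    (hsupp : ∀ i j, Λ i j ≠ 0 → ∃ t, i ∈ A t ∧ j ∈ B t)
    (hinv : ∀ t, IsUnit (Matrix.of fun (a b : Fin (A t).card) =>
      Λ (((A t).orderIsoOfFin rfl a : Fin n)) (((B t).orderIsoOfFin (hc t) b : Fin n)))) :
    {x | x ∈ JSet F f ∧ ∀ y ∈ JSet F f, lamOf F Λ (x * y) = 0} =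
      (Submodule.span F {E : Matrix (Fin n) (Fin n) F | ∃ i j : Fin n,
        f i < f j ∧
        -- `(i,j)` is not subordinated to `𝔻`
        ¬ (∃ t, i ∈ A t ∧ ∃ k ∈ B t, f j < f k) ∧
        E = Matrix.single i j 1} : Set (Matrix (Fin n) (Fin n) F)) := by
  simp only [← and_assoc]
  rw [Matrix.span_single_one_eq_setOf]
  ext x
  refine ⟨fun ⟨hxJ, hlam⟩ i p hip => ?_, fun hx => ⟨fun i j h => hx i j (h ∘ And.left),
    fun y hy => lamOf_mul_eq_zero hsupp (fun i p h => hx i p (fun h' => h'.2 h)) hy⟩⟩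
  rcases not_and_or.mp hip with hip | hsub
  · exact hxJ i p hip
  obtain ⟨t, hiA, k, hkB, hpk⟩ := not_not.mp hsub
  obtain ⟨-, l, -, -, hB⟩ := hblocks t
  refine Matrix.eq_zero_of_sum_mul_eq_zero_of_isUnit (hc t) (hinv t) (v := (x · p))
    (fun j hj => ?_) i hiA
  rw [← Matrix.sum_mul_eq_sum_rook_rows hsupp hdisjB hj, ← lamOf_mul_single]
  exact hlam _ (single_mem_JSet (by rw [hB j hj, ← hB k hkB]; exact hpk))
end
end

section
/- Let G be a finite group, H ≤ G a subgroup, and ξ, ξ' characters of H. If for every g₀ ∈ G there exists a subgroup H₀ ≤ H with g₀H₀g₀⁻¹ ⊆ H such that the characters h ↦ ξ(g₀hg₀⁻¹) and ξ'|_{H₀} are disjoint on H₀, then Ind_H^G ξ and Ind_H^G ξ' are disjoint characters of G. -/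
/-!
Expanding both induced characters and reindexing gives the Mackey-type formula
`⟨Ind ξ, Ind ξ'⟩ = |H|⁻² ∑_{u ∈ G} ∑_{h ∈ G} ξ°(u h u⁻¹) · conj ξ'°(h)`, where `°` is extension by
zero. For fixed `u` the summand is supported on `K = H ∩ u⁻¹ H u`, where it is the character of
`(V_ξ ∘ conj u) ⊗ conj V_ξ'`. The sum of a character over `K` is `|K|` times the dimension of the
invariants, and `K`-invariants are `H₀`-invariants; so the sum over `H₀ ≤ K` vanishing forces the
sum over `K` to vanish.
-/

open scoped BigOperators Classical

noncomputable section

def IsChar (G : Type) [Group G] (χ : G → ℂ) : Prop :=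
  ∃ V : FDRep ℂ G, χ = fun g => V.character g

def charInner (G : Type) [Group G] [Fintype G] (φ ψ : G → ℂ) : ℂ :=
  (Fintype.card G : ℂ)⁻¹ * ∑ g : G, φ g * (starRingEnd ℂ) (ψ g)

/-- The induced class function `Ind_H^G ξ`. -/
def indChar (G : Type) [Group G] [Fintype G] (H : Subgroup G) (ξ : H → ℂ) : G → ℂ :=
  fun g => (Nat.card H : ℂ)⁻¹ *
    ∑ s : G, (if h : s⁻¹ * g * s ∈ H then ξ ⟨s⁻¹ * g * s, h⟩ else 0)

namespace IsChar

variable {G : Type} [Group G] {χ χ' : G → ℂ}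

theorem comp {K : Type} [Group K] (hχ : IsChar G χ) (f : K →* G) : IsChar K (χ ∘ f) := by
  obtain ⟨V, rfl⟩ := hχ
  exact ⟨FDRep.of (V.ρ.comp f), rfl⟩

open CategoryTheory.MonoidalCategory in
theorem mul (hχ : IsChar G χ) (hχ' : IsChar G χ') : IsChar G (χ * χ') := by
  obtain ⟨V, rfl⟩ := hχ
  obtain ⟨W, rfl⟩ := hχ'
  exact ⟨V ⊗ W, (FDRep.char_tensor V W).symm⟩

theorem star (hχ : IsChar G χ) : IsChar G (starRingEnd ℂ ∘ χ) := by
  obtain ⟨V, rfl⟩ := hχ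
  -- conjugate the matrix coefficients of `V` in a basis
  let b := Module.finBasis ℂ V
  let ρ : Representation ℂ G (Fin (Module.finrank ℂ V) → ℂ) :=
    Matrix.toLinAlgEquiv'.toMonoidHom.comp <| (starRingEnd ℂ).mapMatrix.toMonoidHom.comp <|
      (LinearMap.toMatrixAlgEquiv b).toMonoidHom.comp V.ρ
  refine ⟨FDRep.of ρ, funext fun g => ?_⟩
  change starRingEnd ℂ (LinearMap.trace ℂ V (V.ρ g)) = LinearMap.trace ℂ _ (ρ g)
  rw [LinearMap.trace_eq_matrix_trace ℂ b, AddMonoidHom.map_trace]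
  exact (Matrix.trace_toLin'_eq _).symm

end IsChar

theorem FDRep.sum_character_eq_zero_iff {K : Type} [Group K] [Fintype K] (V : FDRep ℂ K) :
    ∑ k, V.character k = 0 ↔ Representation.invariants V.ρ = ⊥ := by
  have hcard : (Nat.card K : ℂ)⁻¹ ≠ 0 := by simp
  rw [← Submodule.finrank_eq_zero, ← Nat.cast_eq_zero (R := ℂ),
    ← FDRep.average_char_eq_finrank_invariants, mul_eq_zero, or_iff_right hcard]

theorem IsChar.sum_eq_zero_of_sum_subgroup_eq_zero {K : Type} [Group K] [Fintype K]
    {χ : K → ℂ} (hχ : IsChar K χ) (L : Subgroup K) (hL : ∑ l : L, χ l = 0) :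
    ∑ k, χ k = 0 := by
  obtain ⟨V, rfl⟩ := hχ
  have hL' : Representation.invariants (V.ρ.comp L.subtype) = ⊥ :=
    (FDRep.sum_character_eq_zero_iff (FDRep.of (V.ρ.comp L.subtype))).mp hL
  refine (FDRep.sum_character_eq_zero_iff V).mpr (eq_bot_iff.mpr ?_)
  exact hL' ▸ fun v hv l => hv l

def zeroExtend {G : Type} [Group G] (H : Subgroup G) (ξ : H → ℂ) : G → ℂ :=
  fun g => if h : g ∈ H then ξ ⟨g, h⟩ else 0

section zeroExtend

variable {G : Type} [Group G] {H : Subgroup G} {ξ : H → ℂ}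

@[simp]
theorem zeroExtend_coe (h : H) : zeroExtend H ξ h = ξ h := dif_pos h.2

theorem zeroExtend_of_notMem {g : G} (hg : g ∉ H) : zeroExtend H ξ g = 0 := dif_neg hg

theorem sum_zeroExtend [Fintype G] : ∑ g, zeroExtend H ξ g = ∑ h : H, ξ h :=
  Finset.sum_congr_set (H : Set G) _ ξ (fun _ hg => dif_pos hg) (fun _ hg => dif_neg hg)

end zeroExtend

theorem sum_conj_conj_eq_card_smul {G M : Type} [Group G] [Fintype G] [AddCommMonoid M]
    (F : G → G → M) :
    ∑ g, ∑ s, ∑ t, F (s⁻¹ * g * s) (t⁻¹ * g * t) =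
      Fintype.card G • ∑ u, ∑ h, F (u * h * u⁻¹) h := by
  have reindex (t : G) :
      ∑ g, ∑ s, F (s⁻¹ * g * s) (t⁻¹ * g * t) = ∑ h, ∑ u, F (u * h * u⁻¹) h := by
    refine Fintype.sum_equiv (MulAut.conj t).symm.toEquiv _ _ fun g => ?_
    refine Fintype.sum_equiv ((Equiv.mulLeft t⁻¹).trans (Equiv.inv G)) _ _ fun s => ?_
    simp [mul_assoc]
  calc ∑ g, ∑ s, ∑ t, F (s⁻¹ * g * s) (t⁻¹ * g * t)
      = ∑ g, ∑ t, ∑ s, F (s⁻¹ * g * s) (t⁻¹ * g * t) :=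
        Finset.sum_congr rfl fun _ _ => Finset.sum_comm
    _ = ∑ t, ∑ g, ∑ s, F (s⁻¹ * g * s) (t⁻¹ * g * t) := Finset.sum_comm
    _ = Fintype.card G • ∑ u, ∑ h, F (u * h * u⁻¹) h := by
        simp only [reindex, Finset.sum_const, Finset.card_univ]
        rw [Finset.sum_comm]

section Induction

variable {G : Type} [Group G] [Fintype G] (H : Subgroup G)

theorem indChar_eq_sum_zeroExtend (ξ : H → ℂ) (g : G) :
    indChar G H ξ g = (Nat.card H : ℂ)⁻¹ * ∑ s, zeroExtend H ξ (s⁻¹ * g * s) :=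
  rfl

theorem charInner_indChar (ξ ξ' : H → ℂ) :
    charInner G (indChar G H ξ) (indChar G H ξ') =
      (Nat.card H : ℂ)⁻¹ ^ 2 *
        ∑ u, ∑ h, zeroExtend H ξ (u * h * u⁻¹) * starRingEnd ℂ (zeroExtend H ξ' h) := by
  have expand (g : G) : indChar G H ξ g * starRingEnd ℂ (indChar G H ξ' g) =
      (Nat.card H : ℂ)⁻¹ ^ 2 * ∑ s, ∑ t,
        zeroExtend H ξ (s⁻¹ * g * s) * starRingEnd ℂ (zeroExtend H ξ' (t⁻¹ * g * t)) := by
    rw [indChar_eq_sum_zeroExtend, indChar_eq_sum_zeroExtend, map_mul, map_inv₀, map_natCast,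
      map_sum, mul_mul_mul_comm, Finset.sum_mul_sum, sq]
  have hG : (Fintype.card G : ℂ) ≠ 0 := Nat.cast_ne_zero.mpr Fintype.card_ne_zero
  rw [charInner, Finset.sum_congr rfl fun g _ => expand g, ← Finset.mul_sum,
    sum_conj_conj_eq_card_smul (fun a b => zeroExtend H ξ a * starRingEnd ℂ (zeroExtend H ξ' b)),
    nsmul_eq_mul]
  field_simp

end Induction

theorem sum_zeroExtend_conj_mul_star_eq_zero {G : Type} [Group G] [Fintype G] {H : Subgroup G}
    {ξ ξ' : H → ℂ} (hξ : IsChar H ξ) (hξ' : IsChar H ξ') (u : G) {H₀ : Subgroup G}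
    (hH₀ : H₀ ≤ H) (hconj : ∀ h ∈ H₀, u * h * u⁻¹ ∈ H)
    (h0 : ∑ h : H₀, zeroExtend H ξ (u * h * u⁻¹) * starRingEnd ℂ (zeroExtend H ξ' h) = 0) :
    ∑ h, zeroExtend H ξ (u * h * u⁻¹) * starRingEnd ℂ (zeroExtend H ξ' h) = 0 := by
  set F : G → ℂ := fun h => zeroExtend H ξ (u * h * u⁻¹) * starRingEnd ℂ (zeroExtend H ξ' h)
  let K : Subgroup G := H ⊓ H.comap (MulAut.conj u).toMonoidHom
  have mem_K (h : G) : h ∈ K ↔ h ∈ H ∧ u * h * u⁻¹ ∈ H := Iff.rfl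
  let φ : K →* H := ((MulAut.conj u).toMonoidHom.comp K.subtype).codRestrict H
    fun k => ((mem_K k).1 k.2).2
  let ψ : K →* H := Subgroup.inclusion inf_le_left
  have hχ : IsChar K fun k => F k := by
    have hF : (fun k : K => F k) = (ξ ∘ φ) * (starRingEnd ℂ ∘ ξ' ∘ ψ) := by
      funext k
      exact congr_arg₂ (· * starRingEnd ℂ ·) (zeroExtend_coe (φ k)) (zeroExtend_coe (ψ k))
    exact hF ▸ (hξ.comp φ).mul (hξ'.star.comp ψ)
  have hF_notMem (h : G) (hh : h ∉ (K : Set G)) : F h = 0 := by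
    rcases not_and_or.mp ((mem_K h).not.mp hh) with hH | hH
    · simp only [F, zeroExtend_of_notMem hH, map_zero, mul_zero]
    · simp only [F, zeroExtend_of_notMem hH, zero_mul]
  rw [Finset.sum_congr_set (K : Set G) F (fun k => F k) (fun _ _ => rfl) hF_notMem]
  refine hχ.sum_eq_zero_of_sum_subgroup_eq_zero (H₀.subgroupOf K) ?_
  have hH₀K : H₀ ≤ K := fun h hh => (mem_K h).2 ⟨hH₀ hh, hconj h hh⟩
  rw [← h0]
  exact Fintype.sum_equiv (Subgroup.subgroupOfEquivOfLe hH₀K).toEquiv _ _ fun _ => rfl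

/-- if for every `g₀ ∈ G` there is a subgroup `H₀ ≤ H` with
`g₀ H₀ g₀⁻¹ ⊆ H` on which the conjugated character `h ↦ ξ(g₀ h g₀⁻¹)` and `ξ'`
are disjoint, then the induced characters `Ind_H^G ξ` and `Ind_H^G ξ'` are disjoint. -/
theorem stmt15 (G : Type) [Group G] [Fintype G] (H : Subgroup G)
    (ξ ξ' : H → ℂ) (hξ : IsChar H ξ) (hξ' : IsChar H ξ')
    (hmackey : ∀ g₀ : G, ∃ H₀ : Subgroup G, H₀ ≤ H ∧
      (∀ h ∈ H₀, g₀ * h * g₀⁻¹ ∈ H) ∧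
      (Nat.card H₀ : ℂ)⁻¹ * ∑ h : G, (if hh : h ∈ H₀ then
          (if hc : g₀ * h * g₀⁻¹ ∈ H then ξ ⟨g₀ * h * g₀⁻¹, hc⟩ else 0) *
            (starRingEnd ℂ) (if hm : h ∈ H then ξ' ⟨h, hm⟩ else 0)
        else 0) = 0) :
    charInner G (indChar G H ξ) (indChar G H ξ') = 0 := by
  rw [charInner_indChar]
  refine mul_eq_zero_of_right _ (Finset.sum_eq_zero fun u _ => ?_)
  obtain ⟨H₀, hH₀, hconj, h0⟩ := hmackey u
  refine sum_zeroExtend_conj_mul_star_eq_zero hξ hξ' u hH₀ hconj ?_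
  rw [← sum_zeroExtend]
  exact (mul_eq_zero.mp h0).resolve_left (by simp)
end
end
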